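/- The curvature-type torsion d-tensors R^{(k)}_{(1)ij} = δN^{(k)}_{(1)i}/δx^j − δN^{(k)}_{(1)j}/δx^i of the Cartan connection of the 2D-monolayer Lagrangian satisfy: R^{(1)}_{(1)12} = −R^{(1)}_{(1)21} = (m e^{−2|V|t/r}/(p|V|r⁴))·[(3/2)·N^{(1)}_{(1)1} − (1/2)·(∂N^{(1)}_{(1)1}/∂ṙ)·ṙ + (1/r − |V|t/r²)·ṙ]·ṙ²·φ̇, R^{(2)}_{(1)12} = −R^{(2)}_{(1)21} = (1/r)·N^{(1)}_{(1)1}, and R^{(1)}_{(1)11} = R^{(1)}_{(1)22} = R^{(2)}_{(1)11} = R^{(2)}_{(1)22} = 0, at every point with r > 0. -/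

import Mathlib

/-- The fundamental metrical d-tensor g_{ij} of the 2D-monolayer Lagrangian. -/
noncomputable def gE (m p V : ℝ) (i j : Fin 2) (t r φ rd φd : ℝ) : ℝ :=
  if i = 0 ∧ j = 0 then (m - 2 * p * r ^ 5 * |V| * Real.exp (2 * |V| * t / r) * (rd ^ 3)⁻¹) / 2
  else if i = 1 ∧ j = 1 then m * r ^ 2 / 2 else 0

/-- The inverse fundamental metric g^{ij}. -/
noncomputable def gI (m p V : ℝ) (i j : Fin 2) (t r φ rd φd : ℝ) : ℝ :=
  if i = 0 ∧ j = 0 then 2 / (m - 2 * p * r ^ 5 * |V| * Real.exp (2 * |V| * t / r) * (rd ^ 3)⁻¹)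
  else if i = 1 ∧ j = 1 then 2 / (m * r ^ 2) else 0

/-- The canonical nonlinear connection components N^{(q)}_{(1)k}. -/
noncomputable def NN (m p V : ℝ) (𝒰 : ℝ → ℝ → ℝ) (q k : Fin 2) (t r φ rd φd : ℝ) : ℝ :=
  if q = 0 then
    if k = 0 then
      -|V| / (2 * r) + (2 * |V| * t / r ^ 2 - 5 / r) * rd - 𝒰 t r * rd ^ 2
        + 3 * m * Real.exp (-(2 * |V| * t) / r) / (4 * p * |V| * r ^ 4) * rd ^ 2 * φd ^ 2
    else m * Real.exp (-(2 * |V| * t) / r) / (2 * p * |V| * r ^ 4) * rd ^ 3 * φd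
  else if k = 0 then φd / r else rd / r

/-- Partial derivative ∂F/∂x^k, with (x¹,x²) = (r,φ). -/
noncomputable def dx (k : Fin 2) (F : ℝ → ℝ → ℝ → ℝ → ℝ → ℝ) (t r φ rd φd : ℝ) : ℝ :=
  if k = 0 then deriv (fun a => F t a φ rd φd) r else deriv (fun a => F t r a rd φd) φ

/-- Partial derivative ∂F/∂y^k, with (y¹,y²) = (ṙ,φ̇). -/
noncomputable def dy (k : Fin 2) (F : ℝ → ℝ → ℝ → ℝ → ℝ → ℝ) (t r φ rd φd : ℝ) : ℝ :=
  if k = 0 then deriv (fun a => F t r φ a φd) rd else deriv (fun a => F t r φ rd a) φd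

/-- Horizontal derivative δF/δx^k = ∂F/∂x^k − N^{(q)}_{(1)k}·∂F/∂y^q. -/
noncomputable def del (m p V : ℝ) (𝒰 : ℝ → ℝ → ℝ) (k : Fin 2)
    (F : ℝ → ℝ → ℝ → ℝ → ℝ → ℝ) (t r φ rd φd : ℝ) : ℝ :=
  dx k F t r φ rd φd - ∑ q : Fin 2, NN m p V 𝒰 q k t r φ rd φd * dy q F t r φ rd φd

/-- Temporal Cartan coefficients G^k_{j1} = (g^{ks}/2)·∂g_{sj}/∂t. -/
noncomputable def Gtime (m p V : ℝ) (k j : Fin 2) (t r φ rd φd : ℝ) : ℝ :=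
  ∑ s : Fin 2, gI m p V k s t r φ rd φd / 2 * deriv (fun a => gE m p V s j a r φ rd φd) t

/-- Vertical Cartan coefficients C^{i(1)}_{j(k)} = (g^{is}/2)·∂g_{js}/∂y^k. -/
noncomputable def Cv (m p V : ℝ) (i j k : Fin 2) (t r φ rd φd : ℝ) : ℝ :=
  ∑ s : Fin 2, gI m p V i s t r φ rd φd / 2 * dy k (gE m p V j s) t r φ rd φd

/-- Spatial Cartan coefficients
L^i_{jk} = (g^{is}/2)·(δg_{js}/δx^k + δg_{ks}/δx^j − δg_{jk}/δx^s). -/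
noncomputable def Lc (m p V : ℝ) (𝒰 : ℝ → ℝ → ℝ) (i j k : Fin 2) (t r φ rd φd : ℝ) : ℝ :=
  ∑ s : Fin 2, gI m p V i s t r φ rd φd / 2 *
    (del m p V 𝒰 k (gE m p V j s) t r φ rd φd + del m p V 𝒰 j (gE m p V k s) t r φ rd φd
      - del m p V 𝒰 s (gE m p V j k) t r φ rd φd)

/-- The curvature-type torsion d-tensors R^{(k)}_{(1)ij} = δN^{(k)}_{(1)i}/δx^j − δN^{(k)}_{(1)j}/δx^i. -/
noncomputable def Rt (m p V : ℝ) (𝒰 : ℝ → ℝ → ℝ) (k i j : Fin 2) (t r φ rd φd : ℝ) : ℝ :=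
  del m p V 𝒰 j (NN m p V 𝒰 k i) t r φ rd φd - del m p V 𝒰 i (NN m p V 𝒰 k j) t r φ rd φd

set_option maxHeartbeats 4000000 in
/-- the curvature-type torsion d-tensors of the Cartan connection of the
2D-monolayer Lagrangian. -/
theorem stmt12 (m p V : ℝ) (hm : 0 < m) (hp : 0 < p) (hV : V ≠ 0)
    (𝒰 : ℝ → ℝ → ℝ) (h𝒰 : ContDiff ℝ 1 (Function.uncurry 𝒰))
    (t r φ rd φd : ℝ) (hr : 0 < r) :
    Rt m p V 𝒰 0 0 1 t r φ rd φd
        = m * Real.exp (-(2 * |V| * t) / r) / (p * |V| * r ^ 4)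
          * (3 / 2 * NN m p V 𝒰 0 0 t r φ rd φd
              - 1 / 2 * dy 0 (NN m p V 𝒰 0 0) t r φ rd φd * rd
              + (1 / r - |V| * t / r ^ 2) * rd) * rd ^ 2 * φd
      ∧ Rt m p V 𝒰 0 1 0 t r φ rd φd
        = -(m * Real.exp (-(2 * |V| * t) / r) / (p * |V| * r ^ 4)
          * (3 / 2 * NN m p V 𝒰 0 0 t r φ rd φd
              - 1 / 2 * dy 0 (NN m p V 𝒰 0 0) t r φ rd φd * rd
              + (1 / r - |V| * t / r ^ 2) * rd) * rd ^ 2 * φd)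
      ∧ Rt m p V 𝒰 1 0 1 t r φ rd φd = 1 / r * NN m p V 𝒰 0 0 t r φ rd φd
      ∧ Rt m p V 𝒰 1 1 0 t r φ rd φd = -(1 / r * NN m p V 𝒰 0 0 t r φ rd φd)
      ∧ Rt m p V 𝒰 0 0 0 t r φ rd φd = 0
      ∧ Rt m p V 𝒰 0 1 1 t r φ rd φd = 0
      ∧ Rt m p V 𝒰 1 0 0 t r φ rd φd = 0
      ∧ Rt m p V 𝒰 1 1 1 t r φ rd φd = 0 := by
  have hrne : r ≠ 0 := hr.ne'
  have hVa : (0:ℝ) < |V| := abs_pos.mpr hV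
  have key1 : Rt m p V 𝒰 0 0 1 t r φ rd φd
        = m * Real.exp (-(2 * |V| * t) / r) / (p * |V| * r ^ 4)
          * (3 / 2 * NN m p V 𝒰 0 0 t r φ rd φd
              - 1 / 2 * dy 0 (NN m p V 𝒰 0 0) t r φ rd φd * rd
              + (1 / r - |V| * t / r ^ 2) * rd) * rd ^ 2 * φd := by
    have h0 : HasDerivAt (fun x : ℝ => -(2 * |V| * t)/x) (2 * |V| * t/r^2) r := by
      have h := (hasDerivAt_inv hrne).const_mul (-(2 * |V| * t))
      have he : (fun x : ℝ => -(2 * |V| * t) * x⁻¹) = fun x : ℝ => -(2 * |V| * t)/x := by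
        funext x; ring
      rw [he] at h
      exact h.congr_deriv (by ring)
    have hnum := h0.exp.const_mul m
    have hden : HasDerivAt (fun x : ℝ => 2 * p * |V| * x^4) (2 * p * |V| * ((4:ℕ)*r^(4-1))) r :=
      (hasDerivAt_pow 4 r).const_mul (2 * p * |V|)
    have hdenne : 2 * p * |V| * r^4 ≠ 0 := by positivity
    have hf := hnum.div hden hdenne
    have h2 : deriv (fun a : ℝ =>
          m * Real.exp (-(2 * |V| * t) / r) / (2 * p * |V| * r ^ 4) * rd ^ 3 * a) φd
        = m * Real.exp (-(2 * |V| * t) / r) / (2 * p * |V| * r ^ 4) * rd ^ 3 := by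
      simpa using ((hasDerivAt_id φd).const_mul
        (m * Real.exp (-(2 * |V| * t) / r) / (2 * p * |V| * r ^ 4) * rd ^ 3)).deriv
    simp only [Rt, del, dx, dy, NN, Fin.sum_univ_two]
    norm_num
    rw [show deriv (fun x : ℝ => m * Real.exp (-(2 * |V| * t) / x) / (2 * p * |V| * x ^ 4)) r = _ from hf.deriv]
    generalize deriv (fun a : ℝ => -|V| / (2 * r) + (2 * |V| * t / r ^ 2 - 5 / r) * a - 𝒰 t r * a ^ 2 + 3 * m * Real.exp (-(2 * |V| * t) / r) / (4 * p * |V| * r ^ 4) * a ^ 2 * φd ^ 2) rd = D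
    field_simp
    ring
  have key2 : Rt m p V 𝒰 1 0 1 t r φ rd φd = 1 / r * NN m p V 𝒰 0 0 t r φ rd φd := by
    simp only [Rt, del, dx, dy, NN, Fin.sum_univ_two]
    norm_num
    field_simp
    ring
  have neg1 : Rt m p V 𝒰 0 1 0 t r φ rd φd = -(Rt m p V 𝒰 0 0 1 t r φ rd φd) := by
    simp only [Rt]; ring
  have neg2 : Rt m p V 𝒰 1 1 0 t r φ rd φd = -(Rt m p V 𝒰 1 0 1 t r φ rd φd) := by
    simp only [Rt]; ring
  refine ⟨key1, by rw [neg1, key1], key2, by rw [neg2, key2], ?_, ?_, ?_, ?_⟩ <;>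
    simp only [Rt, sub_self]
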